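/- For size optimization with compliance C(A) = fᵀ K(A)⁻¹ f, where K(A) = Σ_i A_i K_i with each K_i positive semidefinite and K(A) positive definite, the compliance is a convex and non-increasing function of A on the region where K(A) is positive definite: for each i, ∂C/∂A_i = −uᵀ K_i u ≤ 0 where u = K(A)⁻¹ f. -/

import Mathlib

/-!
Completing the square gives `f ⬝ᵥ M⁻¹ f = max_v (2 f ⬝ᵥ v - v ⬝ᵥ M v)` for positive definite `M`,
the maximum being attained at `v = M⁻¹ f`. As a pointwise maximum of functions affine in `M`,
`M ↦ f ⬝ᵥ M⁻¹ f` is convex on the convex cone of positive definite matrices, and the compliance is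
this function composed with the linear map `A ↦ ∑ i, A i • Kmat i`.

The derivative of inversion at `M` is `dM ↦ -M⁻¹ dM M⁻¹`; since `M⁻¹` is symmetric, the partial
derivative in `A i` is `-(u ⬝ᵥ Kmat i u)` with `u = M⁻¹ f`, which is `≤ 0` as `Kmat i` is
positive semidefinite.
-/

open Matrix

namespace Matrix

variable {ι : Type*}

theorem PosDef.isSymm {M : Matrix ι ι ℝ} (hM : M.PosDef) : M.IsSymm :=
  (conjTranspose_eq_transpose_of_trivial M).symm.trans hM.1

theorem convex_setOf_posDef : Convex ℝ {M : Matrix ι ι ℝ | M.PosDef} :=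
  convex_iff_forall_pos.2 fun _ hP _ hQ _ _ ha hb _ => (hP.smul ha).add (hQ.smul hb)

variable [Fintype ι]

theorem IsSymm.dotProduct_mulVec_comm {R : Type*} [CommSemiring R] {M : Matrix ι ι R}
    (hM : M.IsSymm) (x y : ι → R) : x ⬝ᵥ (M *ᵥ y) = y ⬝ᵥ (M *ᵥ x) := by
  rw [dotProduct_mulVec, ← mulVec_transpose, hM.eq, dotProduct_comm]

variable [DecidableEq ι]

theorem mulVec_inv_mulVec {M : Matrix ι ι ℝ} (hM : IsUnit M) (f : ι → ℝ) :
    M *ᵥ (M⁻¹ *ᵥ f) = f := by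
  rw [mulVec_mulVec, mul_nonsing_inv _ ((isUnit_iff_isUnit_det M).1 hM), one_mulVec]

theorem PosDef.two_mul_dotProduct_sub_le {M : Matrix ι ι ℝ} (hM : M.PosDef) (f v : ι → ℝ) :
    2 * (f ⬝ᵥ v) - v ⬝ᵥ (M *ᵥ v) ≤ f ⬝ᵥ (M⁻¹ *ᵥ f) := by
  set u := M⁻¹ *ᵥ f
  have hf : M *ᵥ u = f := mulVec_inv_mulVec hM.isUnit f
  have hsq : 0 ≤ (u - v) ⬝ᵥ (M *ᵥ (u - v)) := by
    simpa using hM.posSemidef.dotProduct_mulVec_nonneg (u - v)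
  have hcross := hM.isSymm.dotProduct_mulVec_comm u v
  rw [← hf, dotProduct_comm (M *ᵥ u) v, dotProduct_comm (M *ᵥ u) u]
  simp only [mulVec_sub, dotProduct_sub, sub_dotProduct] at hsq
  linarith

theorem convexOn_dotProduct_inv_mulVec (f : ι → ℝ) :
    ConvexOn ℝ {M : Matrix ι ι ℝ | M.PosDef} (fun M => f ⬝ᵥ (M⁻¹ *ᵥ f)) := by
  refine ⟨convex_setOf_posDef, fun P hP Q hQ a b ha hb hab => ?_⟩
  set u := (a • P + b • Q)⁻¹ *ᵥ f
  have hu : (a • P + b • Q) *ᵥ u = f :=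
    mulVec_inv_mulVec (convex_setOf_posDef hP hQ ha hb hab).isUnit f
  have hP' := mul_le_mul_of_nonneg_left (hP.two_mul_dotProduct_sub_le f u) ha
  have hQ' := mul_le_mul_of_nonneg_left (hQ.two_mul_dotProduct_sub_le f u) hb
  calc f ⬝ᵥ u
      = 2 * (f ⬝ᵥ u) - u ⬝ᵥ ((a • P + b • Q) *ᵥ u) := by rw [hu, dotProduct_comm u f]; ring
    _ = a * (2 * (f ⬝ᵥ u) - u ⬝ᵥ (P *ᵥ u)) + b * (2 * (f ⬝ᵥ u) - u ⬝ᵥ (Q *ᵥ u)) := by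
        simp only [add_mulVec, smul_mulVec, dotProduct_add, dotProduct_smul, smul_eq_mul]
        linear_combination (2 * (f ⬝ᵥ u)) * hab.symm
    _ ≤ _ := by simp only [smul_eq_mul]; linarith

section Derivative

-- `hasFDerivAt_ringInverse` needs a normed algebra; all matrix norms give the same derivatives.
attribute [local instance] Matrix.linftyOpNormedRing Matrix.linftyOpNormedAlgebra

omit [DecidableEq ι] in
noncomputable def dotProductMulVecCLM (x y : ι → ℝ) : Matrix ι ι ℝ →L[ℝ] ℝ :=
  LinearMap.toContinuousLinearMap
    { toFun := fun X => x ⬝ᵥ (X *ᵥ y)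
      map_add' := fun X Y => by simp only [add_mulVec, dotProduct_add]
      map_smul' := fun c X => by simp only [smul_mulVec, dotProduct_smul, RingHom.id_apply] }

theorem IsSymm.hasFDerivAt_dotProduct_inv_mulVec {M : Matrix ι ι ℝ} (hM : M.IsSymm)
    (hU : IsUnit M) (f : ι → ℝ) :
    HasFDerivAt (fun X : Matrix ι ι ℝ => f ⬝ᵥ (X⁻¹ *ᵥ f))
      (-dotProductMulVecCLM (M⁻¹ *ᵥ f) (M⁻¹ *ᵥ f)) M := by
  obtain ⟨U, rfl⟩ := hU
  have hinv := hasFDerivAt_ringInverse (𝕜 := ℝ) U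
  rw [coe_units_inv] at hinv
  have hfun : (fun X : Matrix ι ι ℝ => f ⬝ᵥ (X⁻¹ *ᵥ f)) = dotProductMulVecCLM f f ∘ Ring.inverse :=
    funext fun X => by rw [Function.comp_apply, ← nonsing_inv_eq_ringInverse]; rfl
  have hderiv : (dotProductMulVecCLM f f).comp (-ContinuousLinearMap.mulLeftRight ℝ _
      (U : Matrix ι ι ℝ)⁻¹ (U : Matrix ι ι ℝ)⁻¹) =
      -dotProductMulVecCLM ((U : Matrix ι ι ℝ)⁻¹ *ᵥ f) ((U : Matrix ι ι ℝ)⁻¹ *ᵥ f) := by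
    ext X
    change f ⬝ᵥ (-((U : Matrix ι ι ℝ)⁻¹ * X * (U : Matrix ι ι ℝ)⁻¹) *ᵥ f) =
      -(((U : Matrix ι ι ℝ)⁻¹ *ᵥ f) ⬝ᵥ (X *ᵥ ((U : Matrix ι ι ℝ)⁻¹ *ᵥ f)))
    rw [neg_mulVec, dotProduct_neg, ← mulVec_mulVec, ← mulVec_mulVec,
      hM.inv.dotProduct_mulVec_comm, dotProduct_comm]
  rw [hfun]
  exact ((dotProductMulVecCLM f f).hasFDerivAt.comp _ hinv).congr_fderiv hderiv

theorem fderiv_dotProduct_inv_mulVec_comp_linearMap {E : Type*} [NormedAddCommGroup E]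
    [NormedSpace ℝ E] [FiniteDimensional ℝ E] (L : E →ₗ[ℝ] Matrix ι ι ℝ) {x : E}
    (hsymm : (L x).IsSymm) (hU : IsUnit (L x)) (f : ι → ℝ) (y : E) :
    fderiv ℝ (fun z => f ⬝ᵥ ((L z)⁻¹ *ᵥ f)) x y =
      -(((L x)⁻¹ *ᵥ f) ⬝ᵥ (L y *ᵥ ((L x)⁻¹ *ᵥ f))) :=
  DFunLike.congr_fun ((hsymm.hasFDerivAt_dotProduct_inv_mulVec hU f).comp x
    (LinearMap.toContinuousLinearMap L).hasFDerivAt).fderiv y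

end Derivative

end Matrix

/-- For size optimization with `K A = ∑ i, A i • Kmat i` (each `Kmat i`
positive semidefinite) and compliance `C A = f ⬝ᵥ (K A)⁻¹ *ᵥ f`, if `K A` is
positive definite then `∂C/∂A i = -(u ⬝ᵥ Kmat i *ᵥ u) ≤ 0` where
`u = (K A)⁻¹ *ᵥ f`, and `C` is convex on the region where `K` is positive
definite. -/
theorem size_opt_compliance {n m : ℕ} (Kmat : Fin n → Matrix (Fin m) (Fin m) ℝ)
    (hK : ∀ i, (Kmat i).PosSemidef) (f : Fin m → ℝ)
    (K : (Fin n → ℝ) → Matrix (Fin m) (Fin m) ℝ)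
    (hKdef : ∀ A, K A = ∑ i, A i • Kmat i)
    (C : (Fin n → ℝ) → ℝ) (hC : ∀ A, C A = f ⬝ᵥ ((K A)⁻¹ *ᵥ f)) :
    (∀ (A : Fin n → ℝ), (K A).PosDef → ∀ i,
        fderiv ℝ C A (Pi.single i 1) =
          -(((K A)⁻¹ *ᵥ f) ⬝ᵥ (Kmat i *ᵥ ((K A)⁻¹ *ᵥ f))) ∧
        fderiv ℝ C A (Pi.single i 1) ≤ 0) ∧
      ConvexOn ℝ {A | (K A).PosDef} C := by
  obtain rfl : K = Fintype.linearCombination ℝ Kmat :=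
    funext fun A => by rw [hKdef, Fintype.linearCombination_apply]
  obtain rfl : C = fun A => f ⬝ᵥ ((Fintype.linearCombination ℝ Kmat A)⁻¹ *ᵥ f) := funext hC
  refine ⟨fun A hA i => ?_, (convexOn_dotProduct_inv_mulVec f).comp_linearMap _⟩
  rw [fderiv_dotProduct_inv_mulVec_comp_linearMap _ hA.isSymm hA.isUnit,
    Fintype.linearCombination_apply_single, one_smul]
  have hnonneg := (hK i).dotProduct_mulVec_nonneg ((Fintype.linearCombination ℝ Kmat A)⁻¹ *ᵥ f)
  rw [star_trivial] at hnonneg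
  exact ⟨rfl, neg_nonpos.2 hnonneg⟩
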